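/- arXiv:2310.07239 — 10 statements merged into one kernel-verified Lean document; each statement's English description precedes it below -/
import Mathlib

section
/- Let W ∈ ℝ^{n×n} be symmetric with nonnegative diagonal entries and B ∈ ℝ^{n×d}. Let X be a clustering matrix, k ∈ {1,…,n}, H = W·X + B, and let X' be obtained from X by replacing row k with the standard basis vector that is 1 at some coordinate j₁ satisfying H_{k,j₁} = max_j H_{k,j}, leaving all other rows unchanged. Then V(X') ≤ V(X). Moreover, if j₂ is the column where row k of X equals 1 and H_{k,j₁} > H_{k,j₂}, then V(X') < V(X). -/
open Matrix BigOperators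

/-- A clustering matrix: every row is a standard basis vector of `ℝᵈ`. -/
def IsClusteringMatrix {ι : Type*} {d : ℕ} (X : Matrix ι (Fin d) ℝ) : Prop :=
  ∀ i, ∃ j, ∀ k, X i k = if k = j then 1 else 0

/-- Energy function `V(Y) = -Tr(Yᵀ·W·Y + 2·Yᵀ·B)`. -/
noncomputable def energy {n d : ℕ} (W : Matrix (Fin n) (Fin n) ℝ)
    (B Y : Matrix (Fin n) (Fin d) ℝ) : ℝ :=
  -(Yᵀ * W * Y + (2 : ℝ) • (Yᵀ * B)).trace

theorem energy_decreases_serial_update {n d : ℕ}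
    (W : Matrix (Fin n) (Fin n) ℝ) (hW : W.IsSymm) (hdiag : ∀ i, 0 ≤ W i i)
    (B X X' : Matrix (Fin n) (Fin d) ℝ) (hX : IsClusteringMatrix X)
    (k : Fin n) (j₁ : Fin d)
    (H : Matrix (Fin n) (Fin d) ℝ) (hH : H = W * X + B)
    (hmax : ∀ j, H k j ≤ H k j₁)
    (hX' : ∀ i j, X' i j = if i = k then (if j = j₁ then 1 else 0) else X i j) :
    energy W B X' ≤ energy W B X ∧
      ∀ j₂ : Fin d, X k j₂ = 1 → H k j₂ < H k j₁ →
        energy W B X' < energy W B X := by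
  obtain ⟨j₂, hj₂⟩ := hX k
  set D : Fin d → ℝ := fun j => (if j = j₁ then 1 else 0) - (if j = j₂ then 1 else 0) with hD
  set Δ : Matrix (Fin n) (Fin d) ℝ := X' - X with hΔdef
  have hΔ : ∀ i j, Δ i j = if i = k then D j else 0 := by
    intro i j
    simp only [hΔdef, Matrix.sub_apply, hX' i j, hD]
    by_cases h : i = k
    · simp [h, hj₂ j]
    · simp [h]
  have hXeq : X' = X + Δ := by simp [hΔdef]
  have tsym : (Xᵀ * W * Δ).trace = (Δᵀ * W * X).trace := by
    rw [← Matrix.trace_transpose (Xᵀ * W * Δ), Matrix.transpose_mul, Matrix.transpose_mul,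
      Matrix.transpose_transpose, hW.eq, ← Matrix.mul_assoc]
  have key : energy W B X - energy W B X' = 2 * (Δᵀ * H).trace + (Δᵀ * W * Δ).trace := by
    rw [hXeq, hH]
    simp only [energy, Matrix.transpose_add, Matrix.add_mul, Matrix.mul_add,
      Matrix.trace_add, Matrix.trace_smul, smul_eq_mul, Matrix.mul_assoc]
    rw [← Matrix.mul_assoc Xᵀ W Δ, ← Matrix.mul_assoc Δᵀ W X, ← Matrix.mul_assoc Δᵀ W Δ] at *
    rw [tsym]
    ring_nf
  have tH : (Δᵀ * H).trace = H k j₁ - H k j₂ := by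
    simp [Matrix.trace, Matrix.diag, Matrix.mul_apply, Matrix.transpose_apply, hΔ, ite_mul,
      Finset.sum_ite_eq', hD, sub_mul, Finset.sum_sub_distrib]
  have tQ : 0 ≤ (Δᵀ * W * Δ).trace := by
    have h1 : (Δᵀ * W * Δ).trace = ∑ j, D j * W k k * D j := by
      simp [Matrix.trace, Matrix.diag, Matrix.mul_apply, Matrix.transpose_apply, hΔ, ite_mul,
        mul_ite, mul_zero, Finset.sum_ite_eq', Finset.sum_mul]
    rw [h1]
    apply Finset.sum_nonneg
    intro j _
    nlinarith [sq_nonneg (D j), hdiag k]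
  have hle : H k j₂ ≤ H k j₁ := hmax j₂
  constructor
  · rw [tH] at key; linarith
  · intro j₂' h1 h2
    have hj : j₂' = j₂ := by
      by_contra h
      have := hj₂ j₂'
      rw [h1, if_neg h] at this
      norm_num at this
    rw [tH] at key
    rw [hj] at h2
    linarith
end

section
/- Let W ∈ ℝ^{n×n} be symmetric with nonnegative diagonal entries and B ∈ ℝ^{n×d}. Let (X(t))_{t∈ℕ} be a sequence of clustering matrices in 𝕂_{n×d} such that for every t, either X(t+1) = X(t), or there exist a neuron k and columns j₁ ≠ j₂ such that X(t+1) agrees with X(t) off row k, row k of X(t) is one-hot at j₂, row k of X(t+1) is one-hot at j₁, (W·X(t)+B)_{k,j₁} = max_j (W·X(t)+B)_{k,j}, and (W·X(t)+B)_{k,j₁} > (W·X(t)+B)_{k,j₂}. Then the sequence is eventually constant: there exists T such that X(t) = X(T) for all t ≥ T. -/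
open Matrix BigOperators

/-- Twice the Hopfield energy. -/
noncomputable def hopEnergy {n d : ℕ} (W : Matrix (Fin n) (Fin n) ℝ)
    (B : Matrix (Fin n) (Fin d) ℝ) (X : Matrix (Fin n) (Fin d) ℝ) : ℝ :=
  (∑ i, ∑ l, ∑ j, X i j * W i l * X l j) + 2 * ∑ i, ∑ j, X i j * B i j

lemma hopEnergy_lt {n d : ℕ}
    (W : Matrix (Fin n) (Fin n) ℝ) (hW : W.IsSymm) (hdiag : ∀ i, 0 ≤ W i i)
    (B : Matrix (Fin n) (Fin d) ℝ)
    (A A' : Matrix (Fin n) (Fin d) ℝ) (k : Fin n) (j₁ j₂ : Fin d)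
    (hoff : ∀ i, i ≠ k → ∀ j, A' i j = A i j)
    (hrowo : ∀ j, A k j = if j = j₂ then 1 else 0)
    (hrown : ∀ j, A' k j = if j = j₁ then 1 else 0)
    (hlt : (W * A + B) k j₂ < (W * A + B) k j₁) :
    hopEnergy W B A < hopEnergy W B A' := by
  classical
  set dvec : Fin d → ℝ :=
    fun j => (if j = j₁ then (1:ℝ) else 0) - (if j = j₂ then (1:ℝ) else 0) with hdvec
  set D : Matrix (Fin n) (Fin d) ℝ :=
    Matrix.of (fun i j => if i = k then dvec j else 0) with hD
  have hDapp : ∀ i j, D i j = if i = k then dvec j else 0 := fun i j => rfl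
  have hA' : A' = A + D := by
    ext i j
    by_cases h : i = k
    · subst h
      simp [hrown j, hrowo j, hDapp, hdvec]
    · simp [hoff i h j, hDapp, h]
  have sum_dvec : ∀ M : Fin d → ℝ, (∑ j, dvec j * M j) = M j₁ - M j₂ := by
    intro M
    simp [hdvec, sub_mul, Finset.sum_sub_distrib, ite_mul, one_mul, zero_mul,
      Finset.sum_ite_eq']
  -- expansion of the quadratic form
  have expand : (∑ i, ∑ l, ∑ j, (A + D) i j * W i l * (A + D) l j) =
      (∑ i, ∑ l, ∑ j, A i j * W i l * A l j)
      + (∑ i, ∑ l, ∑ j, A i j * W i l * D l j)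
      + (∑ i, ∑ l, ∑ j, D i j * W i l * A l j)
      + (∑ i, ∑ l, ∑ j, D i j * W i l * D l j) := by
    simp only [Matrix.add_apply, add_mul, mul_add, Finset.sum_add_distrib]
    ring
  have sym : (∑ i, ∑ l, ∑ j, A i j * W i l * D l j)
      = (∑ i, ∑ l, ∑ j, D i j * W i l * A l j) := by
    rw [Finset.sum_comm]
    refine Finset.sum_congr rfl fun i _ => Finset.sum_congr rfl fun l _ =>
      Finset.sum_congr rfl fun j _ => ?_
    rw [hW.apply]
    ring
  have cross : (∑ i, ∑ l, ∑ j, D i j * W i l * A l j)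
      = ∑ j, dvec j * (W * A) k j := by
    rw [Finset.sum_eq_single k]
    · rw [Finset.sum_comm]
      refine Finset.sum_congr rfl fun j _ => ?_
      rw [Matrix.mul_apply, Finset.mul_sum]
      refine Finset.sum_congr rfl fun l _ => ?_
      simp [hDapp]
      ring
    · intro b _ hb
      simp [hDapp, hb]
    · simp
  have quadD : (∑ i, ∑ l, ∑ j, D i j * W i l * D l j)
      = W k k * ∑ j, (dvec j)^2 := by
    rw [Finset.sum_eq_single k, Finset.sum_eq_single k]
    · rw [Finset.mul_sum]
      refine Finset.sum_congr rfl fun j _ => ?_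
      simp [hDapp]
      ring
    · intro b _ hb
      simp [hDapp, hb]
    · simp
    · intro b _ hb
      refine Finset.sum_eq_zero fun l _ => Finset.sum_eq_zero fun j _ => ?_
      simp [hDapp, hb]
    · simp
  have lin : (∑ i, ∑ j, (A + D) i j * B i j)
      = (∑ i, ∑ j, A i j * B i j) + ∑ j, dvec j * B k j := by
    simp only [Matrix.add_apply, add_mul, Finset.sum_add_distrib]
    congr 1
    rw [Finset.sum_eq_single k]
    · exact Finset.sum_congr rfl fun j _ => by simp [hDapp]
    · intro b _ hb
      refine Finset.sum_eq_zero fun j _ => ?_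
      simp [hDapp, hb]
    · simp
  have key : hopEnergy W B A' = hopEnergy W B A
      + 2 * (∑ j, dvec j * ((W * A) k j + B k j))
      + W k k * ∑ j, (dvec j)^2 := by
    rw [hA']
    unfold hopEnergy
    rw [expand, sym, cross, quadD, lin]
    simp only [mul_add, Finset.sum_add_distrib]
    ring
  have hpos : (0:ℝ) < ∑ j, dvec j * ((W * A) k j + B k j) := by
    rw [sum_dvec]
    have h1 : ∀ j, (W * A + B) k j = (W * A) k j + B k j := fun j => rfl
    rw [← h1, ← h1]
    linarith
  have hnn : (0:ℝ) ≤ W k k * ∑ j, (dvec j)^2 :=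
    mul_nonneg (hdiag k) (Finset.sum_nonneg fun j _ => sq_nonneg _)
  rw [key]
  linarith

/-- A sequence of strictly improving serial-mode updates of the DHN `(W, B, cl)`
is eventually constant. -/
theorem serial_mode_converges {n d : ℕ}
    (W : Matrix (Fin n) (Fin n) ℝ) (hW : W.IsSymm) (hdiag : ∀ i, 0 ≤ W i i)
    (B : Matrix (Fin n) (Fin d) ℝ)
    (X : ℕ → Matrix (Fin n) (Fin d) ℝ)
    (hcl : ∀ t, IsClusteringMatrix (X t))
    (hstep : ∀ t, X (t + 1) = X t ∨
      ∃ (k : Fin n) (j₁ j₂ : Fin d), j₁ ≠ j₂ ∧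
        (∀ i, i ≠ k → ∀ j, X (t + 1) i j = X t i j) ∧
        (∀ j, X t k j = if j = j₂ then 1 else 0) ∧
        (∀ j, X (t + 1) k j = if j = j₁ then 1 else 0) ∧
        (∀ j, (W * X t + B) k j ≤ (W * X t + B) k j₁) ∧
        (W * X t + B) k j₂ < (W * X t + B) k j₁) :
    ∃ T : ℕ, ∀ t, T ≤ t → X t = X T := by
  classical
  set f : ℕ → ℝ := fun t => hopEnergy W B (X t) with hf
  have hstepE : ∀ t, X (t + 1) = X t ∨ f t < f (t + 1) := by
    intro t
    rcases hstep t with h | ⟨k, j₁, j₂, _, hoff, hrowo, hrown, _, hlt⟩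
    · exact Or.inl h
    · exact Or.inr (hopEnergy_lt W hW hdiag B (X t) (X (t+1)) k j₁ j₂ hoff hrowo hrown hlt)
  have hmono : Monotone f := by
    apply monotone_nat_of_le_succ
    intro t
    rcases hstepE t with h | h
    · simp [hf, h]
    · exact h.le
  -- finiteness of the range of f
  set Mfun : (Fin n → Fin d) → Matrix (Fin n) (Fin d) ℝ :=
    fun g => Matrix.of (fun i j => if j = g i then 1 else 0) with hM
  have hr : ∀ t, X t ∈ Set.range Mfun := by
    intro t
    refine ⟨fun i => (hcl t i).choose, ?_⟩
    ext i j
    exact ((hcl t i).choose_spec j).symm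
  have hfin : (Set.range f).Finite := by
    refine Set.Finite.subset ((Set.finite_range Mfun).image (hopEnergy W B)) ?_
    rintro _ ⟨t, rfl⟩
    exact ⟨X t, hr t, rfl⟩
  -- the maximum of f is attained
  have hne : hfin.toFinset.Nonempty := ⟨f 0, by simp⟩
  obtain ⟨T, hT⟩ : ∃ T, f T = hfin.toFinset.max' hne := by
    have := hfin.toFinset.max'_mem hne
    rw [Set.Finite.mem_toFinset] at this
    exact this
  have hle : ∀ t, f t ≤ f T := by
    intro t
    rw [hT]
    exact Finset.le_max' _ _ (by simp)
  have hfeq : ∀ t, T ≤ t → f t = f T := fun t ht => le_antisymm (hle t) (hmono ht)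
  refine ⟨T, ?_⟩
  intro t ht
  induction t, ht using Nat.le_induction with
  | base => rfl
  | succ t ht ih =>
    rcases hstepE t with h | h
    · rw [h, ih]
    · exfalso
      have h1 := hfeq t ht
      have h2 := hfeq (t + 1) (by omega)
      linarith
end

section
/- Let W ∈ ℝ^{n×n} be symmetric and B ∈ ℝ^{n×d}. Define cl(M), for M ∈ ℝ^{n×d}, as the matrix whose i-th row is the standard basis vector that is 1 at the smallest column index where row i of M attains its maximum and 0 elsewhere. Let X(0) ∈ 𝕂_{n×d} be any clustering matrix and define X(t+1) = cl(W·X(t) + B) for all t ∈ ℕ. Then the trajectory converges to a cycle of length at most 2: there exists T ∈ ℕ such that X(t+2) = X(t) for all t ≥ T. -/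
open Matrix BigOperators

/-- The classification function applied to every row of a matrix: row `i` of `cl M`
is the standard basis vector which is `1` at the smallest column index where row `i`
of `M` attains its maximum, and `0` elsewhere. -/
noncomputable def cl {n d : ℕ} (M : Matrix (Fin n) (Fin d) ℝ) :
    Matrix (Fin n) (Fin d) ℝ :=
  fun i k =>
    if k = (Finset.univ.filter fun j => ∀ l, M i l ≤ M i j).min'
        (by
          have : Nonempty (Fin d) := ⟨k⟩
          obtain ⟨j, hj⟩ := Finite.exists_max fun l => M i l
          exact ⟨j, Finset.mem_filter.mpr ⟨Finset.mem_univ j, hj⟩⟩)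
      then 1 else 0

namespace DHNAux
variable {n d : ℕ}

noncomputable def argm [Nonempty (Fin d)] (M : Matrix (Fin n) (Fin d) ℝ) (i : Fin n) : Fin d :=
  (Finset.univ.filter fun j => ∀ l, M i l ≤ M i j).min'
    (by
      obtain ⟨j, hj⟩ := Finite.exists_max fun l => M i l
      exact ⟨j, Finset.mem_filter.mpr ⟨Finset.mem_univ j, hj⟩⟩)

lemma cl_eq [Nonempty (Fin d)] (M : Matrix (Fin n) (Fin d) ℝ) (i : Fin n) (k : Fin d) :
    cl M i k = if k = argm M i then 1 else 0 := rfl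

lemma argm_isMax [Nonempty (Fin d)] (M : Matrix (Fin n) (Fin d) ℝ) (i : Fin n) :
    ∀ l, M i l ≤ M i (argm M i) := by
  have h := Finset.min'_mem (Finset.univ.filter fun j => ∀ l, M i l ≤ M i j)
    (by
      obtain ⟨j, hj⟩ := Finite.exists_max fun l => M i l
      exact ⟨j, Finset.mem_filter.mpr ⟨Finset.mem_univ j, hj⟩⟩)
  exact (Finset.mem_filter.mp h).2

lemma argm_le [Nonempty (Fin d)] (M : Matrix (Fin n) (Fin d) ℝ) (i : Fin n) {j : Fin d}
    (hj : ∀ l, M i l ≤ M i j) : argm M i ≤ j :=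
  Finset.min'_le _ _ (Finset.mem_filter.mpr ⟨Finset.mem_univ j, hj⟩)

noncomputable def ip (A C : Matrix (Fin n) (Fin d) ℝ) : ℝ := ∑ i, ∑ k, A i k * C i k

lemma ip_eq_trace (A C : Matrix (Fin n) (Fin d) ℝ) : ip A C = Matrix.trace (Aᵀ * C) := by
  simp only [ip, Matrix.trace, Matrix.diag, Matrix.mul_apply, Matrix.transpose_apply]
  exact Finset.sum_comm

lemma ip_symm (W : Matrix (Fin n) (Fin n) ℝ) (hW : W.IsSymm)
    (A C : Matrix (Fin n) (Fin d) ℝ) : ip A (W * C) = ip C (W * A) := by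
  rw [ip_eq_trace, ip_eq_trace, ← Matrix.mul_assoc, ← Matrix.mul_assoc,
    ← Matrix.trace_transpose (Cᵀ * W * A), Matrix.transpose_mul, Matrix.transpose_mul,
    Matrix.transpose_transpose, hW.eq, Matrix.mul_assoc]


end DHNAux

/-- Parallel mode of the DHN `(W, B, cl)` converges to a cycle of length at most 2. -/
theorem parallel_mode_converges_to_two_cycle {n d : ℕ}
    (W : Matrix (Fin n) (Fin n) ℝ) (hW : W.IsSymm)
    (B : Matrix (Fin n) (Fin d) ℝ)
    (X : ℕ → Matrix (Fin n) (Fin d) ℝ)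
    (hX0 : IsClusteringMatrix (X 0))
    (hrec : ∀ t, X (t + 1) = cl (W * X t + B)) :
    ∃ T : ℕ, ∀ t, T ≤ t → X (t + 2) = X t := by
  classical
  open DHNAux in
  rcases Nat.eq_zero_or_pos n with hn | hn
  · subst hn
    exact ⟨0, fun t _ => by ext i k; exact i.elim0⟩
  · obtain ⟨j0, -⟩ := hX0 ⟨0, hn⟩
    haveI : Nonempty (Fin d) := ⟨j0⟩
    -- every state is a clustering matrix
    have hcl : ∀ t, IsClusteringMatrix (X t) := by
      intro t
      cases t with
      | zero => exact hX0
      | succ t =>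
        intro i
        exact ⟨argm (W * X t + B) i, fun k => by rw [hrec, cl_eq]⟩
    choose σ hσ using hcl
    have hσval : ∀ t i, X t i (σ t i) = 1 := fun t i => by rw [hσ]; simp
    have σ_of_X : ∀ {t t' : ℕ}, X t = X t' → σ t = σ t' := by
      intro t t' h
      funext i
      have h1 : X t' i (σ t i) = 1 := h ▸ hσval t i
      rw [hσ] at h1
      by_contra hne
      rw [if_neg hne] at h1
      norm_num at h1
    have hσsucc : ∀ t i, σ (t + 1) i = argm (W * X t + B) i := by
      intro t i
      have h1 : X (t + 1) i (σ (t + 1) i) = 1 := hσval _ i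
      rw [hrec, cl_eq] at h1
      by_contra hne
      rw [if_neg hne] at h1
      norm_num at h1
    set M : ℕ → Matrix (Fin n) (Fin d) ℝ := fun t => W * X t + B with hMdef
    have hmax : ∀ t i l, M t i l ≤ M t i (σ (t + 1) i) := by
      intro t i l
      rw [hσsucc]
      exact argm_isMax _ i l
    have hmin : ∀ t i (j : Fin d), (∀ l, M t i l ≤ M t i j) → σ (t + 1) i ≤ j := by
      intro t i j hj
      rw [hσsucc]
      exact argm_le _ i hj
    have hip : ∀ t (C : Matrix (Fin n) (Fin d) ℝ), ip (X t) C = ∑ i, C i (σ t i) := by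
      intro t C
      unfold ip
      refine Finset.sum_congr rfl fun i _ => ?_
      simp [hσ t i, ite_mul]
    set e : ℕ → ℝ := fun t => ip (X (t + 1)) (W * X t) + ip (X t) B + ip (X (t + 1)) B
      with hedef
    have estep : ∀ t, e (t + 1) - e t
        = ∑ i, (M (t + 1) i (σ (t + 2) i) - M (t + 1) i (σ t i)) := by
      intro t
      have h1 : ip (X (t + 1)) (W * X t) = ip (X t) (W * X (t + 1)) := ip_symm W hW _ _
      have h2 : ∀ i, M (t + 1) i (σ (t + 2) i) - M (t + 1) i (σ t i)
          = ((W * X (t + 1)) i (σ (t + 2) i) + B i (σ (t + 2) i))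
            - ((W * X (t + 1)) i (σ t i) + B i (σ t i)) := by
        intro i; simp [hMdef, Matrix.add_apply]
      rw [Finset.sum_congr rfl fun i _ => h2 i]
      simp only [hedef]
      rw [h1, hip, hip, hip, hip, hip]
      simp only [show t + 1 + 1 = t + 2 from rfl]
      rw [Finset.sum_sub_distrib, Finset.sum_add_distrib, Finset.sum_add_distrib]
      ring
    have enonneg : ∀ t, e t ≤ e (t + 1) := by
      intro t
      have h : 0 ≤ ∑ i, (M (t + 1) i (σ (t + 2) i) - M (t + 1) i (σ t i)) :=
        Finset.sum_nonneg fun i _ => sub_nonneg.mpr (hmax (t + 1) i _)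
      linarith [estep t]
    have emono : ∀ t s, e t ≤ e (t + s) := by
      intro t s
      induction s with
      | zero => simp
      | succ s ih => exact ih.trans (by rw [show t + (s+1) = (t+s) + 1 by ring]; exact enonneg _)
    -- pigeonhole
    obtain ⟨a, b, hab, hfab⟩ := Finite.exists_ne_map_eq_of_infinite σ
    obtain ⟨t1, t2, h12, hσ12⟩ : ∃ t1 t2, t1 < t2 ∧ σ t1 = σ t2 := by
      rcases lt_or_gt_of_ne hab with h | h
      · exact ⟨a, b, h, hfab⟩
      · exact ⟨b, a, h, hfab.symm⟩
    have hXeq : X t1 = X t2 := by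
      ext i k
      rw [hσ t1 i, hσ t2 i, hσ12]
    set q := t2 - t1 with hqdef
    have hq : 0 < q := by omega
    have ht2 : t2 = t1 + q := by omega
    have hper0 : ∀ s, X (t1 + s) = X (t1 + q + s) := by
      intro s
      induction s with
      | zero => simpa using (ht2 ▸ hXeq)
      | succ s ih =>
        rw [show t1 + (s + 1) = (t1 + s) + 1 by ring,
          show t1 + q + (s + 1) = (t1 + q + s) + 1 by ring, hrec, hrec, ih]
    have hper : ∀ t, t1 ≤ t → X (t + q) = X t := by
      intro t ht
      obtain ⟨s, rfl⟩ := Nat.exists_eq_add_of_le ht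
      rw [show t1 + s + q = t1 + q + s by ring]
      exact (hper0 s).symm
    have heper : ∀ t, t1 ≤ t → e (t + q) = e t := by
      intro t ht
      simp only [hedef]
      rw [show t + q + 1 = (t + 1) + q by ring, hper t ht, hper (t + 1) (by omega)]
    have econst : ∀ t, t1 ≤ t → e (t + 1) = e t := by
      intro t ht
      have h1 : e (t + 1) ≤ e (t + q) := by
        rw [show t + q = (t + 1) + (q - 1) by omega]
        exact emono _ _
      have h2 := heper t ht
      have h3 := enonneg t
      linarith
    have hzero : ∀ t, t1 ≤ t → ∀ i, M (t + 1) i (σ t i) = M (t + 1) i (σ (t + 2) i) := by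
      intro t ht i
      have hsum : ∑ i, (M (t + 1) i (σ (t + 2) i) - M (t + 1) i (σ t i)) = 0 := by
        rw [← estep]
        linarith [econst t ht]
      have h := (Finset.sum_eq_zero_iff_of_nonneg
        (fun i _ => sub_nonneg.mpr (hmax (t + 1) i _))).mp hsum i (Finset.mem_univ i)
      linarith
    have hle : ∀ t, t1 ≤ t → ∀ i, σ (t + 2) i ≤ σ t i := by
      intro t ht i
      apply hmin (t + 1) i
      intro l
      calc M (t + 1) i l ≤ M (t + 1) i (σ (t + 2) i) := hmax (t + 1) i l
        _ = M (t + 1) i (σ t i) := (hzero t ht i).symm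
    have hσper : ∀ t, t1 ≤ t → σ (t + q) = σ t := fun t ht => σ_of_X (hper t ht)
    have hchain : ∀ t, t1 ≤ t → ∀ j i, σ (t + 2 * j) i ≤ σ t i := by
      intro t ht j
      induction j with
      | zero => simp
      | succ j ih =>
        intro i
        have h1 : σ (t + 2 * (j + 1)) i ≤ σ (t + 2 * j) i := by
          have h := hle (t + 2 * j) (by omega) i
          rwa [show t + 2 * j + 2 = t + 2 * (j + 1) by ring] at h
        exact h1.trans (ih i)
    refine ⟨t1, fun t ht => ?_⟩
    have hσ2 : ∀ i, σ (t + 2) i = σ t i := by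
      intro i
      refine le_antisymm (hle t ht i) ?_
      have hA : σ (t + 2 * q) i = σ t i := by
        have e1 := hσper t ht
        have e2 := hσper (t + q) (by omega)
        calc σ (t + 2 * q) i = σ (t + q + q) i := by ring_nf
          _ = σ (t + q) i := by rw [e2]
          _ = σ t i := by rw [e1]
      have hB : σ ((t + 2) + 2 * (q - 1)) i ≤ σ (t + 2) i := hchain (t + 2) (by omega) (q - 1) i
      rw [show (t + 2) + 2 * (q - 1) = t + 2 * q by omega, hA] at hB
      exact hB
    ext i k
    rw [hσ t i, hσ (t + 2) i, hσ2 i]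
end

section
/- Let W ∈ ℝ^{n×n} be symmetric with nonnegative diagonal entries. Let X ∈ 𝕂_{n×d} be a clustering matrix, k ∈ {1,…,n}, and let X' be obtained from X by replacing row k with the standard basis vector one-hot at a coordinate j₁ satisfying (W·X)_{k,j₁} = max_j (W·X)_{k,j}, leaving all other rows unchanged. Then the d-cut value of the clustering encoded by X' is at most the d-cut value of the clustering encoded by X: C_W applied to the clustering of X' is ≤ C_W applied to the clustering of X. -/
open Matrix BigOperators

/-- The `k`-th cluster encoded by a clustering matrix: `c_k = {i : Z i k = 1}`. -/
noncomputable def clusterOf {ι : Type*} {d : ℕ} [Fintype ι]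
    (Z : Matrix ι (Fin d) ℝ) (k : Fin d) : Finset ι :=
  Finset.univ.filter fun i => Z i k = 1

/-- The d-cut value `C_A(c_1,…,c_d) = Σ_{k≠l} Σ_{i∈c_k} Σ_{j∈c_l} A i j`. -/
noncomputable def cutValue {ι : Type*} {d : ℕ} [Fintype ι]
    (A : Matrix ι ι ℝ) (c : Fin d → Finset ι) : ℝ :=
  ∑ k : Fin d, ∑ l : Fin d, if l = k then 0 else ∑ i ∈ c k, ∑ j ∈ c l, A i j

lemma clusterOf_eq {n d : ℕ} (Z : Matrix (Fin n) (Fin d) ℝ) (h : Fin n → Fin d)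
    (hZ : ∀ i j, Z i j = if j = h i then 1 else 0) (l : Fin d) :
    clusterOf Z l = Finset.univ.filter fun i => h i = l := by
  unfold clusterOf
  apply Finset.filter_congr
  intro i _
  rw [hZ i l]
  constructor
  · intro hyp
    by_contra hc
    rw [if_neg (fun hh => hc hh.symm)] at hyp
    exact zero_ne_one hyp
  · intro hyp; rw [if_pos hyp.symm]

lemma cutValue_filter {n d : ℕ} (W : Matrix (Fin n) (Fin n) ℝ) (h : Fin n → Fin d) :
    cutValue W (fun l => Finset.univ.filter fun i => h i = l)
      = ∑ i : Fin n, ∑ j : Fin n, if h j = h i then 0 else W i j := by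
  unfold cutValue
  simp only [Finset.sum_filter]
  have step1 : ∀ a b : Fin d,
      (if b = a then (0:ℝ) else ∑ i : Fin n, if h i = a then (∑ j : Fin n, if h j = b then W i j else 0) else 0)
      = ∑ i : Fin n, ∑ j : Fin n,
          (if h i = a then (if h j = b then (if b = a then 0 else W i j) else 0) else 0) := by
    intro a b
    by_cases hba : b = a
    · simp [hba]
    · simp [hba]
  rw [Finset.sum_congr rfl fun a _ => Finset.sum_congr rfl fun b _ => step1 a b]
  set F : Fin d → Fin d → Fin n → Fin n → ℝ := fun a b i j =>
    (if h i = a then (if h j = b then (if b = a then 0 else W i j) else 0) else 0) with hF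
  have swap : (∑ a : Fin d, ∑ b : Fin d, ∑ i : Fin n, ∑ j : Fin n, F a b i j)
      = ∑ i : Fin n, ∑ j : Fin n, ∑ a : Fin d, ∑ b : Fin d, F a b i j := by
    calc (∑ a : Fin d, ∑ b : Fin d, ∑ i : Fin n, ∑ j : Fin n, F a b i j)
        = ∑ a : Fin d, ∑ i : Fin n, ∑ b : Fin d, ∑ j : Fin n, F a b i j :=
          Finset.sum_congr rfl fun a _ => Finset.sum_comm
      _ = ∑ i : Fin n, ∑ a : Fin d, ∑ b : Fin d, ∑ j : Fin n, F a b i j := Finset.sum_comm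
      _ = ∑ i : Fin n, ∑ a : Fin d, ∑ j : Fin n, ∑ b : Fin d, F a b i j :=
          Finset.sum_congr rfl fun i _ => Finset.sum_congr rfl fun a _ => Finset.sum_comm
      _ = ∑ i : Fin n, ∑ j : Fin n, ∑ a : Fin d, ∑ b : Fin d, F a b i j :=
          Finset.sum_congr rfl fun i _ => Finset.sum_comm
  rw [swap]
  apply Finset.sum_congr rfl; intro i _
  apply Finset.sum_congr rfl; intro j _
  simp only [hF]
  have inner1 : ∀ a : Fin d,
      (∑ b : Fin d, if h i = a then (if h j = b then (if b = a then 0 else W i j) else 0) else 0)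
      = if h i = a then (∑ b : Fin d, if h j = b then (if b = a then 0 else W i j) else 0) else 0 := by
    intro a; split_ifs with hca <;> simp
  rw [Finset.sum_congr rfl fun a _ => inner1 a]
  rw [Finset.sum_ite_eq Finset.univ (h i)
    (fun a => ∑ b : Fin d, if h j = b then (if b = a then 0 else W i j) else 0)]
  simp only [Finset.mem_univ, if_true]
  rw [Finset.sum_ite_eq Finset.univ (h j) (fun b => if b = h i then 0 else W i j)]
  simp only [Finset.mem_univ, if_true]

/-- One serial update of the DHN `(W, 0, cl)` does not increase the d-cut value. -/
theorem serial_update_decreases_cut {n d : ℕ}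
    (W : Matrix (Fin n) (Fin n) ℝ) (hW : W.IsSymm) (hdiag : ∀ i, 0 ≤ W i i)
    (X X' : Matrix (Fin n) (Fin d) ℝ) (hX : IsClusteringMatrix X)
    (k : Fin n) (j₁ : Fin d)
    (hmax : ∀ j, (W * X) k j ≤ (W * X) k j₁)
    (hX' : ∀ i j, X' i j = if i = k then (if j = j₁ then 1 else 0) else X i j) :
    cutValue W (clusterOf X') ≤ cutValue W (clusterOf X) := by
  classical
  choose g hg using hX
  set g' : Fin n → Fin d := fun i => if i = k then j₁ else g i with hg'def
  have hgk' : g' k = j₁ := by simp [g']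
  have hgne : ∀ i, i ≠ k → g' i = g i := by intro i hi; simp [g', hi]
  have hg' : ∀ i j, X' i j = if j = g' i then 1 else 0 := by
    intro i j
    rw [hX' i j]
    by_cases hik : i = k <;> simp [g', hik, hg]
  -- rewrite both cut values
  have e1 : cutValue W (clusterOf X) = ∑ i : Fin n, ∑ j : Fin n, if g j = g i then 0 else W i j := by
    have : clusterOf X = fun l => Finset.univ.filter fun i => g i = l :=
      funext fun l => clusterOf_eq X g hg l
    rw [this, cutValue_filter]
  have e2 : cutValue W (clusterOf X') = ∑ i : Fin n, ∑ j : Fin n, if g' j = g' i then 0 else W i j := by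
    have : clusterOf X' = fun l => Finset.univ.filter fun i => g' i = l :=
      funext fun l => clusterOf_eq X' g' hg' l
    rw [this, cutValue_filter]
  rw [e1, e2]
  -- complement: suffices within-sum increases
  have hsplit : ∀ h : Fin n → Fin d,
      (∑ i : Fin n, ∑ j : Fin n, if h j = h i then (0:ℝ) else W i j)
      + (∑ i : Fin n, ∑ j : Fin n, if h j = h i then W i j else 0)
      = ∑ i : Fin n, ∑ j : Fin n, W i j := by
    intro h
    rw [← Finset.sum_add_distrib]
    apply Finset.sum_congr rfl; intro i _
    rw [← Finset.sum_add_distrib]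
    apply Finset.sum_congr rfl; intro j _
    split_ifs <;> ring
  have h1 := hsplit g
  have h2 := hsplit g'
  suffices hsuff : (∑ i : Fin n, ∑ j : Fin n, if g j = g i then W i j else 0)
      ≤ ∑ i : Fin n, ∑ j : Fin n, if g' j = g' i then W i j else 0 by linarith
  -- decompose within-sums around vertex k
  have decomp : ∀ h : Fin n → Fin d,
      (∑ i : Fin n, ∑ j : Fin n, if h j = h i then W i j else 0)
      = W k k
        + (∑ j ∈ Finset.univ.erase k, if h j = h k then W k j else 0)
        + ((∑ i ∈ Finset.univ.erase k, if h k = h i then W i k else 0)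
        + ∑ i ∈ Finset.univ.erase k, ∑ j ∈ Finset.univ.erase k, if h j = h i then W i j else 0) := by
    intro h
    rw [← Finset.add_sum_erase Finset.univ _ (Finset.mem_univ k)]
    rw [← Finset.add_sum_erase Finset.univ (fun j => if h j = h k then W k j else 0) (Finset.mem_univ k)]
    rw [if_pos rfl]
    rw [Finset.sum_congr rfl (fun i (hi : i ∈ Finset.univ.erase k) =>
      (Finset.add_sum_erase Finset.univ (fun j => if h j = h i then W i j else 0) (Finset.mem_univ k)).symm)]
    rw [Finset.sum_add_distrib]
    try ring
  rw [decomp g, decomp g']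
  -- symmetry: cross terms equal
  have symEq : ∀ h : Fin n → Fin d,
      (∑ i ∈ Finset.univ.erase k, if h k = h i then W i k else 0)
      = ∑ j ∈ Finset.univ.erase k, if h j = h k then W k j else 0 := by
    intro h
    apply Finset.sum_congr rfl
    intro i _
    have hw : W i k = W k i := hW.apply k i
    rw [hw]
    by_cases hc : h k = h i
    · rw [if_pos hc, if_pos hc.symm]
    · rw [if_neg hc, if_neg (fun hh => hc hh.symm)]
  rw [symEq g, symEq g']
  -- off-k double sums equal
  have offEq : (∑ i ∈ Finset.univ.erase k, ∑ j ∈ Finset.univ.erase k, if g j = g i then W i j else 0)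
      = ∑ i ∈ Finset.univ.erase k, ∑ j ∈ Finset.univ.erase k, if g' j = g' i then W i j else 0 := by
    apply Finset.sum_congr rfl; intro i hi
    apply Finset.sum_congr rfl; intro j hj
    rw [hgne i (Finset.ne_of_mem_erase hi), hgne j (Finset.ne_of_mem_erase hj)]
  rw [offEq]
  -- key quantity T
  set T : Fin d → ℝ := fun c => ∑ j : Fin n, if g j = c then W k j else 0 with hT
  have hWX : ∀ c, (W * X) k c = T c := by
    intro c
    rw [Matrix.mul_apply]
    apply Finset.sum_congr rfl
    intro j _
    rw [hg j c]
    by_cases hc : g j = c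
    · rw [if_pos hc, if_pos hc.symm, mul_one]
    · rw [if_neg hc, if_neg (fun hh => hc hh.symm), mul_zero]
  have hTmax : ∀ c, T c ≤ T j₁ := fun c => by rw [← hWX, ← hWX]; exact hmax c
  have hTerase : ∀ c : Fin d, (∑ j ∈ Finset.univ.erase k, if g j = c then W k j else 0)
      = T c - (if g k = c then W k k else 0) := by
    intro c
    have := Finset.add_sum_erase Finset.univ (fun j => if g j = c then W k j else 0) (Finset.mem_univ k)
    rw [hT]
    linarith [this]
  -- rewrite the erase sums for g and g'
  have eg : (∑ j ∈ Finset.univ.erase k, if g j = g k then W k j else 0) = T (g k) - W k k := by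
    rw [hTerase (g k), if_pos rfl]
  have eg' : (∑ j ∈ Finset.univ.erase k, if g' j = g' k then W k j else 0)
      = T j₁ - (if g k = j₁ then W k k else 0) := by
    rw [Finset.sum_congr rfl (fun j hj => by rw [hgne j (Finset.ne_of_mem_erase hj), hgk'])]
    exact hTerase j₁
  rw [eg, eg']
  have hite : (if g k = j₁ then W k k else 0) ≤ W k k := by
    split_ifs
    · exact le_refl _
    · exact hdiag k
  have := hTmax (g k)
  linarith
end

section
/- Let W ∈ ℝ^{n×n} and U ∈ ℝ^{d×d} be symmetric, with W having nonnegative diagonal entries, and let B ∈ ℝ^{n×d}. Let X ∈ 𝕂_{n×d} be a clustering matrix, k ∈ {1,…,n}, H = W·X + B, and let X' be obtained from X by replacing row k with the standard basis vector one-hot at a coordinate j₁ with H_{k,j₁} = max_j H_{k,j}, other rows unchanged. Then the d-cut value, with respect to the (n+d)×(n+d) block matrix [[W, B],[Bᵀ, U]], of the clustering encoded by the canonical extension [X'; I_d] is at most the d-cut value of the clustering encoded by [X; I_d]. -/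
open Matrix BigOperators

lemma cutValue_eq_of_fn {ι : Type*} [Fintype ι] {d : ℕ}
    (A : Matrix ι ι ℝ) (g : ι → Fin d) :
    cutValue A (fun l => Finset.univ.filter fun i => g i = l) =
      (∑ i, ∑ j, A i j) - ∑ i, ∑ j, if g j = g i then A i j else 0 := by
  classical
  unfold cutValue
  have step : ∀ (k l : Fin d),
      (if l = k then (0:ℝ) else ∑ i ∈ Finset.univ.filter fun i => g i = k,
        ∑ j ∈ Finset.univ.filter fun i => g i = l, A i j)
      = (∑ i ∈ Finset.univ.filter fun i => g i = k,
          ∑ j ∈ Finset.univ.filter fun i => g i = l, A i j)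
        - (if l = k then (∑ i ∈ Finset.univ.filter fun i => g i = k,
          ∑ j ∈ Finset.univ.filter fun i => g i = l, A i j) else 0) := by
    intro k l; by_cases h : l = k <;> simp [h]
  simp only [step, Finset.sum_sub_distrib]
  congr 1
  · have : ∀ k : Fin d, ∑ l : Fin d, (∑ i ∈ Finset.univ.filter fun i => g i = k,
        ∑ j ∈ Finset.univ.filter fun i => g i = l, A i j)
        = ∑ i ∈ Finset.univ.filter fun i => g i = k, ∑ j, A i j := by
      intro k
      rw [Finset.sum_comm]
      exact Finset.sum_congr rfl fun i _ => Finset.sum_fiberwise _ _ _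
    simp only [this]
    exact Finset.sum_fiberwise _ _ _
  · have : ∀ k : Fin d, (∑ l : Fin d, if l = k then (∑ i ∈ Finset.univ.filter fun i => g i = k,
        ∑ j ∈ Finset.univ.filter fun i => g i = l, A i j) else 0)
        = ∑ i ∈ Finset.univ.filter fun i => g i = k,
            ∑ j, if g j = g i then A i j else 0 := by
      intro k
      rw [Finset.sum_ite_eq' Finset.univ k]
      simp only [Finset.mem_univ, if_true]
      refine Finset.sum_congr rfl fun i hi => ?_
      rw [Finset.mem_filter] at hi
      rw [Finset.sum_filter]
      exact Finset.sum_congr rfl fun j _ => by rw [hi.2]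
    simp only [this]
    exact Finset.sum_fiberwise _ _ _

lemma sum_ite_update {ι : Type*} [Fintype ι] [DecidableEq ι] {d : ℕ}
    (A : Matrix ι ι ℝ) (hA : ∀ i j, A i j = A j i) (g : ι → Fin d) (p : ι) (c : Fin d) :
    (∑ i, ∑ j, if Function.update g p c j = Function.update g p c i then A i j else 0)
    = (∑ i ∈ Finset.univ.erase p, ∑ j ∈ Finset.univ.erase p,
        if g j = g i then A i j else 0)
      + 2 * (∑ j ∈ Finset.univ.erase p, if g j = c then A p j else 0) + A p p := by
  classical
  set g' := Function.update g p c with hg'def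
  have hg' : ∀ x, x ≠ p → g' x = g x := fun x hx => Function.update_of_ne hx _ _
  have hgp : g' p = c := Function.update_self _ _ _
  have inner : ∀ i : ι, (∑ j, if g' j = g' i then A i j else 0)
      = (∑ j ∈ Finset.univ.erase p, if g' j = g' i then A i j else 0)
        + (if g' p = g' i then A i p else 0) :=
    fun i => (Finset.sum_erase_add _ _ (Finset.mem_univ p)).symm
  rw [← Finset.sum_erase_add _ _ (Finset.mem_univ p)]
  simp only [inner, Finset.sum_add_distrib]
  have e1 : (∑ i ∈ Finset.univ.erase p, ∑ j ∈ Finset.univ.erase p,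
      if g' j = g' i then A i j else 0)
      = ∑ i ∈ Finset.univ.erase p, ∑ j ∈ Finset.univ.erase p,
        if g j = g i then A i j else 0 := by
    refine Finset.sum_congr rfl fun i hi => Finset.sum_congr rfl fun j hj => ?_
    rw [hg' i (Finset.ne_of_mem_erase hi), hg' j (Finset.ne_of_mem_erase hj)]
  have e2 : (∑ i ∈ Finset.univ.erase p, if g' p = g' i then A i p else 0)
      = ∑ j ∈ Finset.univ.erase p, if g j = c then A p j else 0 := by
    refine Finset.sum_congr rfl fun i hi => ?_
    rw [hg' i (Finset.ne_of_mem_erase hi), hgp, hA i p]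
    exact if_congr eq_comm rfl rfl
  have e3 : (∑ j ∈ Finset.univ.erase p, if g' j = g' p then A p j else 0)
      = ∑ j ∈ Finset.univ.erase p, if g j = c then A p j else 0 := by
    refine Finset.sum_congr rfl fun j hj => ?_
    rw [hg' j (Finset.ne_of_mem_erase hj), hgp]
  rw [e1, e2, e3]
  simp only [if_true]
  ring

/-- One serial update of the DHN `(W, B, cl)` does not increase the d-cut value of
the clustering encoded by the canonical extension, with respect to the block
matrix `[[W, B], [Bᵀ, U]]`. -/
theorem serial_update_decreases_extended_cut {n d : ℕ}
    (W : Matrix (Fin n) (Fin n) ℝ) (hW : W.IsSymm) (hdiag : ∀ i, 0 ≤ W i i)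
    (U : Matrix (Fin d) (Fin d) ℝ) (hU : U.IsSymm)
    (B X X' : Matrix (Fin n) (Fin d) ℝ) (hX : IsClusteringMatrix X)
    (k : Fin n) (j₁ : Fin d)
    (hmax : ∀ j, (W * X + B) k j ≤ (W * X + B) k j₁)
    (hX' : ∀ i j, X' i j = if i = k then (if j = j₁ then 1 else 0) else X i j) :
    cutValue (Matrix.fromBlocks W B Bᵀ U) (clusterOf (Matrix.fromRows X' 1)) ≤
      cutValue (Matrix.fromBlocks W B Bᵀ U) (clusterOf (Matrix.fromRows X 1)) := by
  classical
  set ι := Fin n ⊕ Fin d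
  set A : Matrix ι ι ℝ := Matrix.fromBlocks W B Bᵀ U with hA
  have hAsymm : ∀ i j : ι, A i j = A j i := by
    rintro (i | i) (j | j)
    · exact (hW.apply i j).symm
    · rfl
    · rfl
    · exact (hU.apply i j).symm
  -- the cluster-assignment function
  set g : ι → Fin d := fun i => Sum.elim (fun i => (hX i).choose) id i with hg
  have hXg : ∀ (i : Fin n) (c : Fin d), X i c = if c = g (Sum.inl i) then 1 else 0 :=
    fun i c => (hX i).choose_spec c
  set p : ι := Sum.inl k
  set j₀ : Fin d := g p with hj₀
  -- identify the clusterings as fibers of g and update g p j₁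
  have hc : clusterOf (Matrix.fromRows X 1) = fun l => Finset.univ.filter fun i => g i = l := by
    funext l
    ext i
    simp only [clusterOf, Finset.mem_filter, Finset.mem_univ, true_and]
    cases i with
    | inl i =>
        rw [Matrix.fromRows_apply_inl, hXg i l]
        constructor
        · intro h; by_contra hne; rw [if_neg] at h; exact one_ne_zero h.symm
          simpa [eq_comm] using hne
        · intro h; rw [if_pos h.symm]
    | inr i =>
        rw [Matrix.fromRows_apply_inr, Matrix.one_apply]
        show (if i = l then (1:ℝ) else 0) = 1 ↔ i = l
        constructor
        · intro h; by_contra hne; rw [if_neg hne] at h; exact one_ne_zero h.symm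
        · intro h; rw [if_pos h]
  have hc' : clusterOf (Matrix.fromRows X' 1)
      = fun l => Finset.univ.filter fun i => Function.update g p j₁ i = l := by
    funext l
    ext i
    simp only [clusterOf, Finset.mem_filter, Finset.mem_univ, true_and]
    cases i with
    | inl i =>
        rw [Matrix.fromRows_apply_inl, hX' i l]
        by_cases hik : i = k
        · subst hik
          rw [if_pos rfl, Function.update_self]
          constructor
          · intro h; by_contra hne
            rw [if_neg (fun hh => hne hh.symm)] at h; exact one_ne_zero h.symm
          · intro h; rw [if_pos h.symm]
        · rw [if_neg hik, hXg i l,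
            Function.update_of_ne (fun h => hik (Sum.inl.inj h)) _ _]
          constructor
          · intro h; by_contra hne; rw [if_neg] at h; exact one_ne_zero h.symm
            simpa [eq_comm] using hne
          · intro h; rw [if_pos h.symm]
    | inr i =>
        rw [Matrix.fromRows_apply_inr, Matrix.one_apply,
          Function.update_of_ne (fun h => Sum.inr_ne_inl h) _ _]
        show (if i = l then (1:ℝ) else 0) = 1 ↔ i = l
        constructor
        · intro h; by_contra hne; rw [if_neg hne] at h; exact one_ne_zero h.symm
        · intro h; rw [if_pos h]
  rw [hc, hc', cutValue_eq_of_fn, cutValue_eq_of_fn]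
  have hgself : g = Function.update g p j₀ := (Function.update_eq_self p g).symm
  rw [sub_le_sub_iff_left]
  conv_lhs => rw [hgself]
  rw [sum_ite_update A hAsymm g p j₀, sum_ite_update A hAsymm g p j₁]
  -- reduces to comparing the two "link" sums
  have hL : ∀ c : Fin d, (∑ j ∈ Finset.univ.erase p, if g j = c then A p j else 0)
      = (W * X + B) k c - (if j₀ = c then W k k else 0) := by
    intro c
    have hfull : (∑ j : ι, if g j = c then A p j else 0) = (W * X + B) k c := by
      rw [Fintype.sum_sum_type]
      have h1 : (∑ i : Fin n, if g (Sum.inl i) = c then A p (Sum.inl i) else 0)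
          = (W * X) k c := by
        rw [Matrix.mul_apply]
        refine Finset.sum_congr rfl fun i _ => ?_
        rw [hXg i c]
        by_cases h : g (Sum.inl i) = c
        · rw [if_pos h, if_pos h.symm, mul_one]; rfl
        · rw [if_neg h, if_neg (fun hh => h hh.symm), mul_zero]
      have h2 : (∑ j : Fin d, if g (Sum.inr j) = c then A p (Sum.inr j) else 0)
          = B k c := by
        have : ∀ j : Fin d, (if g (Sum.inr j) = c then A p (Sum.inr j) else 0)
            = if j = c then B k j else 0 := fun j => rfl
        simp only [this]
        rw [Finset.sum_ite_eq' Finset.univ c]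
        simp
      rw [h1, h2]; simp [Matrix.add_apply]
    have h5 : (∑ j ∈ Finset.univ.erase p, if g j = c then A p j else 0)
        + (if g p = c then A p p else 0)
        = ∑ j : ι, if g j = c then A p j else 0 :=
      Finset.sum_erase_add Finset.univ _ (Finset.mem_univ p)
    have hpp : (if g p = c then A p p else 0) = if j₀ = c then W k k else 0 := rfl
    rw [hpp] at h5
    linarith
  rw [hL j₀, hL j₁]
  have h0 := hdiag k
  have hm := hmax j₀
  by_cases hjj : j₀ = j₁
  · subst hjj; simp
  · rw [if_pos rfl, if_neg hjj]
    have : (W * X + B) k j₀ - W k k ≤ (W * X + B) k j₁ - 0 := by linarith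
    nlinarith [this]
end

section
/- Let W ∈ ℝ^{n×n} and U ∈ ℝ^{d×d} be symmetric, B ∈ ℝ^{n×d}, and let X ∈ 𝕂_{n×d} be a clustering matrix. Let Ŵ = [[W, B],[Bᵀ, U]] ∈ ℝ^{(n+d)×(n+d)}. Then the d-cut value with respect to Ŵ of the clustering encoded by the canonical extension [X; I_d] equals Vol(Ŵ) − Tr(U) + V(X), where Vol(Ŵ) is the sum of all entries of Ŵ and V(X) = −Tr(Xᵀ·W·X + 2·Xᵀ·B). -/
open Matrix BigOperators

/-! For a clustering matrix `Z` the block sums `∑_{i ∈ c_k} ∑_{j ∈ c_l} A i j` are the entries of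
`Zᵀ A Z`. Since every index lies in exactly one cluster (`Z 𝟙 = 𝟙`), these entries add up to
`Vol(A)`, so the cut value, being the sum of the off-diagonal blocks, is `Vol(A) - Tr(Zᵀ A Z)`.
For `Z = [X; I_d]` and `A = Ŵ`, multiplying out the blocks gives
`Tr(Zᵀ Ŵ Z) = Tr(Xᵀ W X) + Tr(Xᵀ B) + Tr(Bᵀ X) + Tr(U) = Tr(U) - V(X)`. -/

namespace IsClusteringMatrix

variable {ι : Type*} {d : ℕ} {Z : Matrix ι (Fin d) ℝ}

lemma one : IsClusteringMatrix (1 : Matrix (Fin d) (Fin d) ℝ) :=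
  fun i => ⟨i, fun k => by simp [one_apply, eq_comm]⟩

lemma fromRows {κ : Type*} {Y : Matrix κ (Fin d) ℝ} (hZ : IsClusteringMatrix Z)
    (hY : IsClusteringMatrix Y) : IsClusteringMatrix (Matrix.fromRows Z Y) := by
  rintro (i | i)
  exacts [hZ i, hY i]

lemma mulVec_one (hZ : IsClusteringMatrix Z) : Z *ᵥ 1 = 1 := by
  ext i
  obtain ⟨j, hj⟩ := hZ i
  simp [mulVec, dotProduct, hj]

lemma sum_clusterOf [Fintype ι] (hZ : IsClusteringMatrix Z) (k : Fin d) (f : ι → ℝ) :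
    ∑ i ∈ clusterOf Z k, f i = ∑ i, Z i k * f i := by
  rw [clusterOf, Finset.sum_filter]
  refine Finset.sum_congr rfl fun i _ => ?_
  obtain ⟨j, hj⟩ := hZ i
  by_cases hk : k = j <;> simp [hj, hk]

lemma sum_clusterOf_sum_clusterOf [Fintype ι] (hZ : IsClusteringMatrix Z) (A : Matrix ι ι ℝ)
    (k l : Fin d) :
    ∑ i ∈ clusterOf Z k, ∑ j ∈ clusterOf Z l, A i j = (Zᵀ * A * Z) k l := by
  simp only [hZ.sum_clusterOf, mul_apply, transpose_apply, Finset.mul_sum, Finset.sum_mul]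
  rw [Finset.sum_comm]
  exact Finset.sum_congr rfl fun j _ => Finset.sum_congr rfl fun i _ => by ring

end IsClusteringMatrix

lemma Matrix.sum_sum_eq_one_dotProduct_mulVec_one {ι κ R : Type*} [Fintype ι] [Fintype κ]
    [Semiring R] (A : Matrix ι κ R) : ∑ i, ∑ j, A i j = 1 ⬝ᵥ A *ᵥ 1 := by
  simp [mulVec, dotProduct]

lemma Matrix.sum_sum_transpose_mul_mul {ι κ R : Type*} [Fintype ι] [Fintype κ] [CommSemiring R]
    (A : Matrix ι ι R) {Z : Matrix ι κ R} (hZ : Z *ᵥ 1 = 1) :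
    ∑ k, ∑ l, (Zᵀ * A * Z) k l = ∑ i, ∑ j, A i j := by
  simp only [sum_sum_eq_one_dotProduct_mulVec_one, ← mulVec_mulVec, hZ, dotProduct_mulVec,
    vecMul_transpose]

lemma cutValue_eq_sum_sub_sum_diag {ι : Type*} {d : ℕ} [Fintype ι] (A : Matrix ι ι ℝ)
    (c : Fin d → Finset ι) :
    cutValue A c = ∑ k, ∑ l, ∑ i ∈ c k, ∑ j ∈ c l, A i j - ∑ k, ∑ i ∈ c k, ∑ j ∈ c k, A i j := by
  rw [cutValue, ← Finset.sum_sub_distrib]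
  refine Finset.sum_congr rfl fun k _ => ?_
  have hsplit : ∀ l, (if l = k then 0 else ∑ i ∈ c k, ∑ j ∈ c l, A i j) =
      ∑ i ∈ c k, ∑ j ∈ c l, A i j - if l = k then ∑ i ∈ c k, ∑ j ∈ c k, A i j else 0 := by
    intro l
    split_ifs with h
    · rw [h, sub_self]
    · rw [sub_zero]
  simp only [hsplit, Finset.sum_sub_distrib, Finset.sum_ite_eq', Finset.mem_univ, if_true]

lemma IsClusteringMatrix.cutValue_clusterOf {ι : Type*} {d : ℕ} [Fintype ι]
    {Z : Matrix ι (Fin d) ℝ} (hZ : IsClusteringMatrix Z) (A : Matrix ι ι ℝ) :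
    cutValue A (clusterOf Z) = ∑ i, ∑ j, A i j - (Zᵀ * A * Z).trace := by
  rw [cutValue_eq_sum_sub_sum_diag]
  simp only [hZ.sum_clusterOf_sum_clusterOf, sum_sum_transpose_mul_mul A hZ.mulVec_one]
  rfl

lemma Matrix.fromRows_transpose_mul_fromBlocks_mul_fromRows {m n l R : Type*}
    [Fintype m] [Fintype n] [Semiring R]
    (X : Matrix m l R) (Y : Matrix n l R) (A : Matrix m m R) (B : Matrix m n R)
    (C : Matrix n m R) (D : Matrix n n R) :
    (fromRows X Y)ᵀ * fromBlocks A B C D * fromRows X Y =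
      Xᵀ * A * X + Xᵀ * B * Y + (Yᵀ * C * X + Yᵀ * D * Y) := by
  rw [transpose_fromRows, fromCols_mul_fromBlocks, fromCols_mul_fromRows]
  simp only [Matrix.add_mul]
  abel

theorem extended_cut_eq_vol_sub_trace_add_energy_general {n d : ℕ}
    (W : Matrix (Fin n) (Fin n) ℝ)
    (U : Matrix (Fin d) (Fin d) ℝ)
    (B X : Matrix (Fin n) (Fin d) ℝ) (hX : IsClusteringMatrix X) :
    cutValue (Matrix.fromBlocks W B Bᵀ U) (clusterOf (Matrix.fromRows X 1)) =
      (∑ i, ∑ j, Matrix.fromBlocks W B Bᵀ U i j) - U.trace + energy W B X := by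
  rw [(hX.fromRows .one).cutValue_clusterOf, fromRows_transpose_mul_fromBlocks_mul_fromRows]
  have hBX : (Bᵀ * X).trace = (Xᵀ * B).trace := by
    rw [← trace_transpose, transpose_mul, transpose_transpose]
  simp only [transpose_one, Matrix.one_mul, Matrix.mul_one, trace_add, trace_smul, hBX, energy,
    smul_eq_mul]
  ring

/-- The cut value of the clustering encoded by the canonical extension `[X; I_d]`
with respect to `Ŵ = [[W, B], [Bᵀ, U]]` equals `Vol(Ŵ) − Tr(U) + V(X)`. -/
theorem extended_cut_eq_vol_sub_trace_add_energy {n d : ℕ}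
    (W : Matrix (Fin n) (Fin n) ℝ) (hW : W.IsSymm)
    (U : Matrix (Fin d) (Fin d) ℝ) (hU : U.IsSymm)
    (B X : Matrix (Fin n) (Fin d) ℝ) (hX : IsClusteringMatrix X) :
    cutValue (Matrix.fromBlocks W B Bᵀ U) (clusterOf (Matrix.fromRows X 1)) =
      (∑ i, ∑ j, Matrix.fromBlocks W B Bᵀ U i j) - U.trace + energy W B X :=
  extended_cut_eq_vol_sub_trace_add_energy_general W U B X hX
end

section
/- Let W ∈ ℝ^{n×n} be symmetric and B ∈ ℝ^{n×d}. Let m, M ∈ ℝ be such that m ≤ −Tr(Xᵀ·W·X + 2·Xᵀ·B·Y) ≤ M for all clustering matrices X ∈ 𝕂_{n×d} and Y ∈ 𝕂_{d×d}. Let κ ∈ ℝ satisfy m + κ > M, and set U ∈ ℝ^{d×d} with U_{ij} = −κ for i ≠ j and U_{ii} = 0. If X ∈ 𝕂_{n×d} and Y ∈ 𝕂_{d×d} are such that the (n+d)×d block clustering matrix [X; Y] encodes a d-clustering of minimal d-cut value with respect to [[W, B],[Bᵀ, U]] among all clustering matrices in 𝕂_{(n+d)×d}, then Y is a permutation matrix.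 -/
/-!
Write each clustering matrix as `clusteringMatrix f`, where `f` assigns each row its cluster.
A d-cut value is then the total weight minus the weight inside clusters, and for the stacked
matrix `[X; Y]` the inside weight is `Tr(XᵀWX + 2XᵀBY)` plus the weight of `U` inside the
clusters of `Y`. If `Y` sends two rows to the same cluster, that last term is at most `-κ`,
whereas for `[X; I]` it vanishes; comparing the two cuts with the bounds `m`, `M` gives
`m + κ ≤ M`.
-/

open Matrix BigOperators

theorem sum_le_apply_of_nonpos {γ : Type*} [Fintype γ] {F : γ → ℝ} (hF : ∀ c, F c ≤ 0)
    (c : γ) : ∑ c, F c ≤ F c :=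
  (Finset.sum_le_sum_of_subset_of_nonpos' (Finset.subset_univ {c}) fun c _ _ => hF c).trans_eq
    (Finset.sum_singleton F c)

section SameClusterSum

variable {ι κ α : Type*} [Fintype ι] [Fintype κ] [DecidableEq α]

def sameClusterSum (A : Matrix ι κ ℝ) (f : ι → α) (g : κ → α) : ℝ :=
  ∑ i, ∑ j, if f i = g j then A i j else 0

theorem sameClusterSum_transpose (A : Matrix ι κ ℝ) (f : ι → α) (g : κ → α) :
    sameClusterSum Aᵀ g f = sameClusterSum A f g := by
  unfold sameClusterSum
  rw [Finset.sum_comm]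
  simp only [transpose_apply, eq_comm]

theorem sameClusterSum_fromBlocks {ι' κ' : Type*} [Fintype ι'] [Fintype κ']
    (A : Matrix ι κ ℝ) (B : Matrix ι κ' ℝ) (C : Matrix ι' κ ℝ) (D : Matrix ι' κ' ℝ)
    (f : ι → α) (f' : ι' → α) (g : κ → α) (g' : κ' → α) :
    sameClusterSum (fromBlocks A B C D) (Sum.elim f f') (Sum.elim g g') =
      sameClusterSum A f g + sameClusterSum B f g' + sameClusterSum C f' g +
        sameClusterSum D f' g' := by
  simp only [sameClusterSum, Fintype.sum_sum_type, Finset.sum_add_distrib]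
  rw [add_add_add_comm, ← add_assoc]
  -- the `Decidable` instances of the `if`s still mention `Sum.elim`, so only `rfl` closes this
  rfl

theorem sameClusterSum_fromBlocks_transpose (W : Matrix ι ι ℝ) (B : Matrix ι κ ℝ)
    (U : Matrix κ κ ℝ) (f : ι → α) (g : κ → α) :
    sameClusterSum (fromBlocks W B Bᵀ U) (Sum.elim f g) (Sum.elim f g) =
      sameClusterSum W f f + 2 * sameClusterSum B f g + sameClusterSum U g g := by
  rw [sameClusterSum_fromBlocks, sameClusterSum_transpose]
  ring

omit [Fintype κ] [DecidableEq α] in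
theorem sameClusterSum_id_id [DecidableEq ι] (A : Matrix ι ι ℝ) :
    sameClusterSum A id id = A.trace := by
  simp [sameClusterSum, trace]

theorem sameClusterSum_le_of_nonpos (A : Matrix ι κ ℝ) (hA : ∀ i j, A i j ≤ 0)
    (f : ι → α) (g : κ → α) {a : ι} {b : κ} (hab : f a = g b) :
    sameClusterSum A f g ≤ A a b := by
  have hentry : ∀ i j, (if f i = g j then A i j else 0) ≤ 0 := fun i j => by
    split_ifs
    exacts [hA i j, le_rfl]
  calc sameClusterSum A f g ≤ ∑ j, if f a = g j then A a j else 0 :=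
        sum_le_apply_of_nonpos (fun i => Finset.sum_nonpos fun j _ => hentry i j) a
    _ ≤ if f a = g b then A a b else 0 := sum_le_apply_of_nonpos (hentry a) b
    _ = A a b := if_pos hab

end SameClusterSum

section ClusteringMatrix

variable {ι : Type*} {d : ℕ}

def clusteringMatrix (f : ι → Fin d) : Matrix ι (Fin d) ℝ :=
  of fun i k => if f i = k then 1 else 0

@[simp]
theorem clusteringMatrix_apply (f : ι → Fin d) (i : ι) (k : Fin d) :
    clusteringMatrix f i k = if f i = k then 1 else 0 :=
  rfl

theorem isClusteringMatrix_clusteringMatrix (f : ι → Fin d) :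
    IsClusteringMatrix (clusteringMatrix f) :=
  fun i => ⟨f i, fun k => by simp [eq_comm]⟩

theorem IsClusteringMatrix.exists_eq_clusteringMatrix {X : Matrix ι (Fin d) ℝ}
    (hX : IsClusteringMatrix X) : ∃ f : ι → Fin d, X = clusteringMatrix f := by
  choose f hf using hX
  exact ⟨f, ext fun i k => by simp [hf i k, eq_comm]⟩

theorem fromRows_clusteringMatrix {ι' : Type*} (f : ι → Fin d) (g : ι' → Fin d) :
    fromRows (clusteringMatrix f) (clusteringMatrix g) = clusteringMatrix (Sum.elim f g) := by
  ext (i | i) k <;> rfl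

variable [Fintype ι]

theorem cutValue_eq_sub (A : Matrix ι ι ℝ) (c : Fin d → Finset ι) :
    cutValue A c =
      ∑ k, ∑ l, ∑ i ∈ c k, ∑ j ∈ c l, A i j - ∑ k, ∑ i ∈ c k, ∑ j ∈ c k, A i j := by
  rw [cutValue, ← Finset.sum_sub_distrib]
  refine Finset.sum_congr rfl fun k _ => ?_
  rw [eq_sub_iff_add_eq, Fintype.sum_eq_add_sum_compl k, Fintype.sum_eq_add_sum_compl k,
    if_pos rfl, zero_add, add_comm]
  exact congrArg _ <| Finset.sum_congr rfl fun l hl =>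
    if_neg (Finset.notMem_singleton.1 (Finset.mem_compl.1 hl))

theorem clusterOf_clusteringMatrix (f : ι → Fin d) (k : Fin d) :
    clusterOf (clusteringMatrix f) k = ({i | f i = k} : Finset ι) := by
  ext i
  simp [clusterOf]

theorem cutValue_clusterOf_clusteringMatrix (A : Matrix ι ι ℝ) (f : ι → Fin d) :
    cutValue A (clusterOf (clusteringMatrix f)) =
      ∑ i, ∑ j, A i j - sameClusterSum A f f := by
  rw [cutValue_eq_sub]
  simp only [clusterOf_clusteringMatrix]
  congr 1
  · simp only [Finset.sum_comm (γ := Fin d), Finset.sum_fiberwise]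
  · rw [sameClusterSum, ← Finset.sum_fiberwise Finset.univ f]
    refine Finset.sum_congr rfl fun k _ => Finset.sum_congr rfl fun i hi => ?_
    rw [(Finset.mem_filter.1 hi).2, Finset.sum_filter]
    simp only [eq_comm]

theorem trace_transpose_mul_mul_clusteringMatrix {κ : Type*} [Fintype κ] (A : Matrix ι κ ℝ)
    (f : ι → Fin d) (g : κ → Fin d) :
    ((clusteringMatrix f)ᵀ * A * clusteringMatrix g).trace = sameClusterSum A f g := by
  simp only [trace, diag_apply, mul_apply, transpose_apply, clusteringMatrix_apply,
    ite_mul, one_mul, zero_mul, mul_ite, mul_one, mul_zero]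
  rw [Finset.sum_comm]
  simp only [Finset.sum_ite_eq, Finset.mem_univ, if_true]
  exact Finset.sum_comm

end ClusteringMatrix

theorem bottom_block_of_min_cut_is_permutation_general {n d : ℕ}
    (W : Matrix (Fin n) (Fin n) ℝ)
    (B : Matrix (Fin n) (Fin d) ℝ) (m M : ℝ)
    (hm : ∀ (X : Matrix (Fin n) (Fin d) ℝ) (Y : Matrix (Fin d) (Fin d) ℝ),
      IsClusteringMatrix X → IsClusteringMatrix Y →
      m ≤ -(Xᵀ * W * X + (2 : ℝ) • (Xᵀ * B * Y)).trace)
    (hM : ∀ (X : Matrix (Fin n) (Fin d) ℝ) (Y : Matrix (Fin d) (Fin d) ℝ),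
      IsClusteringMatrix X → IsClusteringMatrix Y →
      -(Xᵀ * W * X + (2 : ℝ) • (Xᵀ * B * Y)).trace ≤ M)
    (κ : ℝ) (hκ : M < m + κ)
    (U : Matrix (Fin d) (Fin d) ℝ)
    (hUoff : ∀ i j, i ≠ j → U i j = -κ) (hUdiag : ∀ i, U i i = 0)
    (X : Matrix (Fin n) (Fin d) ℝ) (Y : Matrix (Fin d) (Fin d) ℝ)
    (hX : IsClusteringMatrix X) (hY : IsClusteringMatrix Y)
    (hmin : ∀ Z : Matrix (Fin n ⊕ Fin d) (Fin d) ℝ, IsClusteringMatrix Z →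
      cutValue (Matrix.fromBlocks W B Bᵀ U) (clusterOf (Matrix.fromRows X Y)) ≤
        cutValue (Matrix.fromBlocks W B Bᵀ U) (clusterOf Z)) :
    ∃ σ : Equiv.Perm (Fin d), ∀ i j, Y i j = if σ i = j then 1 else 0 := by
  have hκ_nonneg : 0 ≤ κ := by linarith [hm X Y hX hY, hM X Y hX hY]
  obtain ⟨f, rfl⟩ := hX.exists_eq_clusteringMatrix
  obtain ⟨g, rfl⟩ := hY.exists_eq_clusteringMatrix
  suffices hg : Function.Injective g from
    ⟨Equiv.ofBijective g hg.bijective_of_finite, fun i j => by simp⟩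
  intro a b hab
  by_contra hne
  have hU_nonpos : ∀ i j, U i j ≤ 0 := fun i j => by
    rcases eq_or_ne i j with rfl | hij
    exacts [(hUdiag i).le, (hUoff i j hij).trans_le (neg_nonpos.2 hκ_nonneg)]
  have hU_trace : U.trace = 0 := by simp [trace, hUdiag]
  have hcut := hmin _ (isClusteringMatrix_clusteringMatrix (Sum.elim f id))
  rw [fromRows_clusteringMatrix, cutValue_clusterOf_clusteringMatrix,
    cutValue_clusterOf_clusteringMatrix, sameClusterSum_fromBlocks_transpose,
    sameClusterSum_fromBlocks_transpose, sameClusterSum_id_id, hU_trace] at hcut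
  have hlow := hm _ _ hX hY
  have hup := hM _ _ hX (isClusteringMatrix_clusteringMatrix id)
  simp only [trace_add, trace_smul, trace_transpose_mul_mul_clusteringMatrix, smul_eq_mul]
    at hlow hup
  have hU := sameClusterSum_le_of_nonpos U hU_nonpos g g hab
  rw [hUoff a b hne] at hU
  linarith

/-- If `[X; Y]` encodes a minimal-cut clustering of `G(W, B, U)` with `U` having
sufficiently negative off-diagonal entries, then `Y` is a permutation matrix. -/
theorem bottom_block_of_min_cut_is_permutation {n d : ℕ}
    (W : Matrix (Fin n) (Fin n) ℝ) (hW : W.IsSymm)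
    (B : Matrix (Fin n) (Fin d) ℝ) (m M : ℝ)
    (hm : ∀ (X : Matrix (Fin n) (Fin d) ℝ) (Y : Matrix (Fin d) (Fin d) ℝ),
      IsClusteringMatrix X → IsClusteringMatrix Y →
      m ≤ -(Xᵀ * W * X + (2 : ℝ) • (Xᵀ * B * Y)).trace)
    (hM : ∀ (X : Matrix (Fin n) (Fin d) ℝ) (Y : Matrix (Fin d) (Fin d) ℝ),
      IsClusteringMatrix X → IsClusteringMatrix Y →
      -(Xᵀ * W * X + (2 : ℝ) • (Xᵀ * B * Y)).trace ≤ M)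
    (κ : ℝ) (hκ : M < m + κ)
    (U : Matrix (Fin d) (Fin d) ℝ)
    (hUoff : ∀ i j, i ≠ j → U i j = -κ) (hUdiag : ∀ i, U i i = 0)
    (X : Matrix (Fin n) (Fin d) ℝ) (Y : Matrix (Fin d) (Fin d) ℝ)
    (hX : IsClusteringMatrix X) (hY : IsClusteringMatrix Y)
    (hmin : ∀ Z : Matrix (Fin n ⊕ Fin d) (Fin d) ℝ, IsClusteringMatrix Z →
      cutValue (Matrix.fromBlocks W B Bᵀ U) (clusterOf (Matrix.fromRows X Y)) ≤
        cutValue (Matrix.fromBlocks W B Bᵀ U) (clusterOf Z)) :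
    ∃ σ : Equiv.Perm (Fin d), ∀ i j, Y i j = if σ i = j then 1 else 0 :=
  bottom_block_of_min_cut_is_permutation_general W B m M hm hM κ hκ U hUoff hUdiag X Y hX hY hmin
end

section
/- Let Q ∈ ℝ^{n×n} be symmetric and let Q̃ ∈ ℝ^{n×n} agree with Q off the diagonal and have Q̃_{ii} = 0 for all i. Let X ∈ 𝕂_{n×d} be a clustering matrix encoding the d-clustering {c_1,…,c_d} of {1,…,n}, and let u ∈ {1,…,n}. Then there exists a constant c₀ ∈ ℝ, depending on Q, X and u but not on m, such that for every m ∈ {1,…,d} the modularity of the clustering obtained by moving u into cluster m, namely Q(c_1∖{u},…,c_{m−1}∖{u}, c_m∪{u}, c_{m+1}∖{u},…,c_d∖{u}), equals c₀ + 2·Σ_{j=1}^n Q̃_{uj}·X_{jm}. -/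
open Matrix BigOperators

/-- The modularity of a clustering: `Q(c_1,…,c_d) = Σ_k Σ_{i,j ∈ c_k} Q i j`. -/
noncomputable def modularity {n d : ℕ} (Q : Matrix (Fin n) (Fin n) ℝ)
    (c : Fin d → Finset (Fin n)) : ℝ :=
  ∑ k : Fin d, ∑ i ∈ c k, ∑ j ∈ c k, Q i j

lemma sum_insert_insert {n : ℕ} (Q : Matrix (Fin n) (Fin n) ℝ) (hQ : Q.IsSymm)
    (A : Finset (Fin n)) (u : Fin n) :
    ∑ i ∈ insert u A, ∑ j ∈ insert u A, Q i j
      = (∑ i ∈ A.erase u, ∑ j ∈ A.erase u, Q i j) + Q u u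
        + 2 * ∑ j ∈ A.erase u, Q u j := by
  have h1 : insert u A = insert u (A.erase u) := by
    ext x; simp [Finset.mem_insert, Finset.mem_erase]; tauto
  rw [h1]
  have hu : u ∉ A.erase u := Finset.notMem_erase u A
  rw [Finset.sum_insert hu]
  have h2 : ∀ i, ∑ j ∈ insert u (A.erase u), Q i j
      = Q i u + ∑ j ∈ A.erase u, Q i j := fun i => Finset.sum_insert hu
  simp only [h2]
  rw [Finset.sum_add_distrib]
  have h3 : ∑ i ∈ A.erase u, Q i u = ∑ i ∈ A.erase u, Q u i :=
    Finset.sum_congr rfl fun i _ => hQ.apply u i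
  rw [h3]; ring

/-- The modularity of the clustering obtained by moving node `u` into cluster `m`
equals a constant (independent of `m`) plus `2 Σ_j Q̃_{u j}·X_{j m}`. -/
theorem modularity_of_move {n d : ℕ}
    (Q Qt : Matrix (Fin n) (Fin n) ℝ) (hQ : Q.IsSymm)
    (hQt_off : ∀ i j, i ≠ j → Qt i j = Q i j) (hQt_diag : ∀ i, Qt i i = 0)
    (X : Matrix (Fin n) (Fin d) ℝ) (hX : IsClusteringMatrix X)
    (u : Fin n) :
    ∃ c₀ : ℝ, ∀ m : Fin d,
      modularity Q (fun l =>
        if l = m then insert u (clusterOf X l) else (clusterOf X l).erase u) =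
        c₀ + 2 * ∑ j, Qt u j * X j m := by
  refine ⟨(∑ l : Fin d, ∑ i ∈ (clusterOf X l).erase u,
      ∑ j ∈ (clusterOf X l).erase u, Q i j) + Q u u, fun m => ?_⟩
  have hsum : ∑ j, Qt u j * X j m = ∑ j ∈ (clusterOf X m).erase u, Q u j := by
    have hterm : ∀ j, Qt u j * X j m
        = if j ∈ (clusterOf X m).erase u then Q u j else 0 := by
      intro j
      by_cases hju : j = u
      · subst hju
        simp [hQt_diag, Finset.mem_erase]
      · obtain ⟨k, hk⟩ := hX j
        have hmem : j ∈ (clusterOf X m).erase u ↔ X j m = 1 := by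
          simp [clusterOf, Finset.mem_erase, hju]
        by_cases hmk : m = k
        · have h1 : X j m = 1 := by rw [hk m]; simp [hmk]
          rw [if_pos (hmem.mpr h1), h1, mul_one,
            hQt_off u j (fun h => hju h.symm)]
        · have h0 : X j m = 0 := by rw [hk m]; simp [hmk]
          have : j ∉ (clusterOf X m).erase u := fun h => by
            rw [hmem] at h; rw [h0] at h; norm_num at h
          rw [if_neg this, h0, mul_zero]
      
    calc ∑ j, Qt u j * X j m
        = ∑ j, if j ∈ (clusterOf X m).erase u then Q u j else 0 :=
          Finset.sum_congr rfl fun j _ => hterm j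
      _ = ∑ j ∈ (clusterOf X m).erase u, Q u j := by
          rw [Finset.sum_ite_mem, Finset.univ_inter]
  rw [hsum]
  unfold modularity
  have hterm2 : ∀ l : Fin d,
      (∑ i ∈ (if l = m then insert u (clusterOf X l) else (clusterOf X l).erase u),
        ∑ j ∈ (if l = m then insert u (clusterOf X l) else (clusterOf X l).erase u), Q i j)
      = (∑ i ∈ (clusterOf X l).erase u, ∑ j ∈ (clusterOf X l).erase u, Q i j)
        + (if l = m then Q u u + 2 * ∑ j ∈ (clusterOf X m).erase u, Q u j else 0) := by
    intro l
    by_cases h : l = m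
    · subst h
      simp only [eq_self_iff_true, if_true]
      rw [sum_insert_insert Q hQ (clusterOf X l) u]; ring
    · simp [h]
  calc ∑ l : Fin d, ∑ i ∈ (if l = m then insert u (clusterOf X l) else (clusterOf X l).erase u),
        ∑ j ∈ (if l = m then insert u (clusterOf X l) else (clusterOf X l).erase u), Q i j
      = ∑ l : Fin d, ((∑ i ∈ (clusterOf X l).erase u, ∑ j ∈ (clusterOf X l).erase u, Q i j)
        + (if l = m then Q u u + 2 * ∑ j ∈ (clusterOf X m).erase u, Q u j else 0)) :=
        Finset.sum_congr rfl fun l _ => hterm2 l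
    _ = (∑ l : Fin d, ∑ i ∈ (clusterOf X l).erase u, ∑ j ∈ (clusterOf X l).erase u, Q i j)
        + (Q u u + 2 * ∑ j ∈ (clusterOf X m).erase u, Q u j) := by
        rw [Finset.sum_add_distrib, Finset.sum_ite_eq' Finset.univ m]
        simp
    _ = _ := by ring
end

section
/- Let Q ∈ ℝ^{n×n} be symmetric and let Q̃ ∈ ℝ^{n×n} agree with Q off the diagonal and have Q̃_{ii} = 0 for all i. Let X ∈ 𝕂_{n×d} be a clustering matrix encoding the d-clustering {c_1,…,c_d} of {1,…,n}, and let u ∈ {1,…,n}. Then the set of indices m ∈ {1,…,d} maximizing the modularity Q(c_1∖{u},…,c_{m−1}∖{u}, c_m∪{u}, c_{m+1}∖{u},…,c_d∖{u}) of the clustering obtained by moving u into cluster m coincides with the set of indices m maximizing Σ_{j=1}^n Q̃_{uj}·X_{jm}. In particular, one Louvain update of node u on the clustering encoded by X yields the same result as one serial update at neuron u of the d-dimensional Hopfield network (Q̃, 0, cl) in state X. -/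
open Matrix BigOperators

/-- The Louvain update of node `u` (move `u` to a cluster maximizing modularity) and
the serial Hopfield update at neuron `u` of `(Q̃, 0, cl)` have the same maximizers:
`m` maximizes the modularity of the moved clustering iff it maximizes
`Σ_j Q̃_{u j}·X_{j m} = (Q̃·X)_{u m}`. -/
theorem louvain_update_eq_hopfield_update {n d : ℕ}
    (Q Qt : Matrix (Fin n) (Fin n) ℝ) (hQ : Q.IsSymm)
    (hQt_off : ∀ i j, i ≠ j → Qt i j = Q i j) (hQt_diag : ∀ i, Qt i i = 0)
    (X : Matrix (Fin n) (Fin d) ℝ) (hX : IsClusteringMatrix X)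
    (u : Fin n) :
    ∀ m : Fin d,
      (∀ m' : Fin d,
        modularity Q (fun l =>
          if l = m' then insert u (clusterOf X l) else (clusterOf X l).erase u) ≤
        modularity Q (fun l =>
          if l = m then insert u (clusterOf X l) else (clusterOf X l).erase u)) ↔
      (∀ m' : Fin d, ∑ j, Qt u j * X j m' ≤ ∑ j, Qt u j * X j m) := by
  classical
  have hX01 : ∀ i k, X i k = 0 ∨ X i k = 1 := by
    intro i k; obtain ⟨j, hj⟩ := hX i; rw [hj k]; split <;> simp
  set S : Fin d → Finset (Fin n) := fun k => (clusterOf X k).erase u with hS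
  have hA : ∀ m : Fin d, (∑ j, Qt u j * X j m) = ∑ j ∈ S m, Q u j := by
    intro m
    have h1 : (∑ j, Qt u j * X j m) = ∑ j ∈ clusterOf X m, Qt u j := by
      rw [clusterOf, Finset.sum_filter]
      refine Finset.sum_congr rfl fun j _ => ?_
      rcases hX01 j m with h | h <;> simp [h]
    rw [h1, ← Finset.sum_erase (clusterOf X m) (hQt_diag u)]
    refine Finset.sum_congr rfl fun j hj => ?_
    exact hQt_off u j (Ne.symm (Finset.ne_of_mem_erase hj))
  have huS : ∀ m, u ∉ S m := fun m => Finset.notMem_erase u _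
  have hins : ∀ m, insert u (clusterOf X m) = insert u (S m) := by
    intro m; ext a
    simp only [hS, Finset.mem_insert, Finset.mem_erase]
    tauto
  have hsym : ∀ i j, Q i j = Q j i := fun i j => hQ.apply j i
  have key : ∀ m : Fin d,
      modularity Q (fun l =>
        if l = m then insert u (clusterOf X l) else (clusterOf X l).erase u)
      = (∑ k, ∑ i ∈ S k, ∑ j ∈ S k, Q i j) + Q u u + 2 * ∑ j, Qt u j * X j m := by
    intro m
    have step : ∀ k : Fin d,
        (∑ i ∈ (if k = m then insert u (clusterOf X k) else (clusterOf X k).erase u),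
          ∑ j ∈ (if k = m then insert u (clusterOf X k) else (clusterOf X k).erase u), Q i j)
        = (∑ i ∈ S k, ∑ j ∈ S k, Q i j)
          + (if k = m then Q u u + 2 * ∑ j ∈ S m, Q u j else 0) := by
      intro k
      by_cases hk : k = m
      · subst hk
        simp only [eq_self_iff_true, if_true, hins k]
        rw [Finset.sum_insert (huS k)]
        simp only [Finset.sum_insert (huS k)]
        have e1 : ∑ i ∈ S k, Q i u = ∑ j ∈ S k, Q u j :=
          Finset.sum_congr rfl fun i _ => hsym i u
        rw [Finset.sum_add_distrib, e1]
        ring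
      · simp [hk, hS]
    unfold modularity
    rw [Finset.sum_congr rfl fun k _ => step k, Finset.sum_add_distrib,
      Finset.sum_ite_eq' Finset.univ m
        (fun _ => Q u u + 2 * ∑ j ∈ S m, Q u j)]
    simp only [Finset.mem_univ, if_pos, hA m]
    ring
  intro m
  constructor
  · intro H m'
    have h := H m'
    rw [key m, key m'] at h
    linarith
  · intro H m'
    have h := H m'
    rw [key m, key m']
    linarith
end

section
/- Let M ∈ ℝ^{n×d} and let C ∈ 𝕂_{n×d} be a clustering matrix such that for every row i, the column j with C_{ij} = 1 satisfies M_{ij} = max_k M_{ik}. Then ‖C − M‖_F ≤ ‖S − M‖_F for every clustering matrix S ∈ 𝕂_{n×d}, where ‖·‖_F denotes the Frobenius norm ‖A‖_F = √(Σ_{i,j} A_{ij}²); that is, C is a nearest point to M in 𝕂_{n×d} in the Frobenius norm. -/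
open Matrix BigOperators

/-- The Frobenius norm `‖A‖_F = √(Σ_{i,j} A_{ij}²)`. -/
noncomputable def frobeniusNorm {n d : ℕ} (A : Matrix (Fin n) (Fin d) ℝ) : ℝ :=
  Real.sqrt (∑ i, ∑ j, (A i j) ^ 2)

lemma row_sum_indicator {d : ℕ} (v : Fin d → ℝ) (j : Fin d) :
    ∑ k, ((if k = j then (1:ℝ) else 0) - v k) ^ 2
      = (∑ k, (v k) ^ 2) - 2 * v j + 1 := by
  have : ∀ k, ((if k = j then (1:ℝ) else 0) - v k) ^ 2
      = (v k) ^ 2 - 2 * (if k = j then v k else 0) + (if k = j then 1 else 0) := by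
    intro k; by_cases h : k = j <;> simp [h] <;> ring
  simp only [this, Finset.sum_add_distrib, Finset.sum_sub_distrib,
    Finset.sum_ite_eq', Finset.mem_univ, if_true, ← Finset.mul_sum]

/-- `cl(M)` is a nearest point to `M` among clustering matrices in the Frobenius
norm. -/
theorem cl_is_frobenius_projection {n d : ℕ}
    (M C : Matrix (Fin n) (Fin d) ℝ) (hC : IsClusteringMatrix C)
    (hCmax : ∀ i j, C i j = 1 → ∀ k, M i k ≤ M i j) :
    ∀ S : Matrix (Fin n) (Fin d) ℝ, IsClusteringMatrix S →
      frobeniusNorm (C - M) ≤ frobeniusNorm (S - M) := by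
  intro S hS
  unfold frobeniusNorm
  apply Real.sqrt_le_sqrt
  apply Finset.sum_le_sum
  intro i _
  obtain ⟨jC, hjC⟩ := hC i
  obtain ⟨jS, hjS⟩ := hS i
  have hC1 : C i jC = 1 := by simp [hjC jC]
  have hle : M i jS ≤ M i jC := hCmax i jC hC1 jS
  have e1 : ∑ k, ((C - M) i k) ^ 2 = (∑ k, (M i k) ^ 2) - 2 * M i jC + 1 := by
    have := row_sum_indicator (fun k => M i k) jC
    simpa [Matrix.sub_apply, hjC] using this
  have e2 : ∑ k, ((S - M) i k) ^ 2 = (∑ k, (M i k) ^ 2) - 2 * M i jS + 1 := by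
    have := row_sum_indicator (fun k => M i k) jS
    simpa [Matrix.sub_apply, hjS] using this
  rw [e1, e2]
  linarith
end
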